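/- arXiv:2006.11362 — 3 statements merged into one kernel-verified Lean document; each statement's English description precedes it below -/
import Mathlib

section
/- Under Mallows' model with a single sample (n=1), for any 0<φ<1, any integer K, any a ∈ 𝒜, any W ∈ ℒ(𝒜), and any C,C' ⊆ 𝒜∖{a} such that C dominates C' with respect to W, we have π_W({V ∈ ℒ(𝒜) : w_V(C'≻a) ≥ K}) ≤ π_W({V ∈ ℒ(𝒜) : w_V(C≻a) ≥ K}). -/
/-!
Write `A_C = {V : w_V(C≻a) ≥ K}`. Domination is a chain of single replacements of some `c ∈ C`
by an alternative `c'` that `W` ranks below `c`, so it suffices to treat `C = D ∪ {c}`,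
`C' = D ∪ {c'}`. Exchanging the positions of `c` and `c'` in `V` (i.e. `V ↦ V ∘ (c c')`)
maps `A_{C'} \ A_C` injectively into `A_C \ A_{C'}`: a ranking in `A_{C'} \ A_C` puts `c'` above
`a` above `c`, and moving `c` up past `c'` does not increase the Kendall-tau distance to `W`.
Since `φ ≤ 1`, each ranking in `A_{C'} \ A_C` is thus outweighed by its image.
-/

namespace Voting

open Finset

/-- A ranking over `m` alternatives: `V a` is the position of alternative `a`
(smaller position = more preferred), i.e. `a ≻_V b ↔ V a < V b`. -/
abbrev Ranking (m : ℕ) := Equiv.Perm (Fin m)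

/-- Kendall-tau distance: the number of (unordered) pairs on which `V` and `W` disagree. -/
def KT {m : ℕ} (V W : Ranking m) : ℕ :=
  (Finset.univ.filter (fun p : Fin m × Fin m => V p.1 < V p.2 ∧ W p.2 < W p.1)).card

/-- Mallows' single-sample probability of `V` given ground truth `W` and dispersion `φ`. -/
noncomputable def mallows1 {m : ℕ} (φ : ℝ) (W V : Ranking m) : ℝ :=
  φ ^ KT V W / ∑ U : Ranking m, φ ^ KT U W

/-- Mallows' model with `n` i.i.d. samples. -/
noncomputable def mallows {m : ℕ} (φ : ℝ) (n : ℕ) :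
    Ranking m → (Fin n → Ranking m) → ℝ :=
  fun W P => ∏ i, mallows1 φ W (P i)

/-- `L_{a≻others}` : rankings in which `a` is ranked at the top. -/
def Ltop {m : ℕ} (a : Fin m) : Set (Ranking m) := {V | ∀ b, b ≠ a → V a < V b}

/-- `L_{others≻a}` : rankings in which `a` is ranked at the bottom. -/
def Lbot {m : ℕ} (a : Fin m) : Set (Ranking m) := {V | ∀ b, b ≠ a → V b < V a}

/-- `w_P(b≻a)` : the weighted-majority-graph weight on the edge `b → a` of profile `P`. -/
def wpair {m n : ℕ} (P : Fin n → Ranking m) (b a : Fin m) : ℤ :=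
  ((Finset.univ.filter (fun i => P i b < P i a)).card : ℤ) -
    ((Finset.univ.filter (fun i => P i a < P i b)).card : ℤ)

/-- `w_P(B≻a) = Σ_{b∈B} w_P(b≻a)`. -/
def wset {m n : ℕ} (P : Fin n → Ranking m) (B : Finset (Fin m)) (a : Fin m) : ℤ :=
  ∑ b ∈ B, wpair P b a

/-- The threshold test on the statistic `w_P(B≻a)` with threshold `K`/randomization `Γ`. -/
noncomputable def wTest {m : ℕ} (n : ℕ) (B : Finset (Fin m)) (a : Fin m) (K Γ : ℝ) :
    (Fin n → Ranking m) → ℝ :=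
  fun P =>
    if K < ((wset P B a : ℤ) : ℝ) then 1
    else if ((wset P B a : ℤ) : ℝ) < K then 0
    else Γ

/-- The Borda score of `a` in `V`: the number of alternatives ranked below `a`. -/
def Borda {m : ℕ} (a : Fin m) (V : Ranking m) : ℕ :=
  (Finset.univ.filter (fun b => V a < V b)).card


/-- `w_V(C≻a)` for a single ranking: `+1` for each `c ∈ C` above `a`, `-1` otherwise. -/
def wset1 {m : ℕ} (V : Ranking m) (C : Finset (Fin m)) (a : Fin m) : ℤ :=
  ∑ c ∈ C, (if V c < V a then (1 : ℤ) else -1)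

/-- `C` dominates `C'` w.r.t. `W`: `C = C'` or `C'` is obtained from `C` by lowering some
alternatives according to `W` (a bijection `F : C∖C' → C'∖C` with `c ≻_W F c`). -/
def Dominates {m : ℕ} (W : Ranking m) (C C' : Finset (Fin m)) : Prop :=
  C = C' ∨ ∃ F : ((C \ C' : Finset (Fin m)) : Set (Fin m)) ≃
      ((C' \ C : Finset (Fin m)) : Set (Fin m)),
    ∀ c, W c.1 < W (F c).1

theorem _root_.Finset.sum_le_sum_of_injOn_sdiff {ι M : Type*} [DecidableEq ι] [AddCommMonoid M]
    [PartialOrder M] [IsOrderedAddMonoid M] {s t : Finset ι} {f : ι → M} (e : ι → ι)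
    (he : Set.InjOn e ↑(s \ t)) (hest : Set.MapsTo e ↑(s \ t) ↑(t \ s))
    (hf : ∀ x ∈ t \ s, 0 ≤ f x) (hfe : ∀ x ∈ s \ t, f x ≤ f (e x)) :
    ∑ x ∈ s, f x ≤ ∑ x ∈ t, f x := by
  rw [← sum_inter_add_sum_sdiff s t, ← sum_inter_add_sum_sdiff t s, inter_comm]
  refine add_le_add le_rfl ?_
  calc ∑ x ∈ s \ t, f x
      ≤ ∑ x ∈ s \ t, f (e x) := sum_le_sum hfe
    _ = ∑ x ∈ (s \ t).image e, f x := (sum_image he).symm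
    _ ≤ ∑ x ∈ t \ s, f x :=
        sum_le_sum_of_subset_of_nonneg (image_subset_iff.2 fun x hx => hest hx)
          fun x hx _ => hf x hx

section Swap

variable {α β : Type*} [DecidableEq α] [LinearOrder β] (W : α → β) {c c' : α}

theorem swap_lt_left_iff (hW : W c < W c') (z : α) :
    W (Equiv.swap c c' z) < W c ↔ W z < W c := by
  rw [Equiv.swap_apply_def]
  split_ifs <;> grind

theorem lt_swap_right_iff (hW : W c < W c') (z : α) :
    W c' < W (Equiv.swap c c' z) ↔ W c' < W z := by
  rw [Equiv.swap_apply_def]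
  split_ifs <;> grind

/-- When `W c < W c'` and `V c' < V c`, this involution maps the pairs on which
`V ∘ swap c c'` disagrees with `W` to pairs on which `V` disagrees with `W`. -/
def swapDiscordant (c c' : α) (p : α × α) : α × α :=
  (if W p.2 < W c then Equiv.swap c c' p.1 else p.1,
   if W c' < W p.1 then Equiv.swap c c' p.2 else p.2)

theorem swapDiscordant_involutive (hW : W c < W c') :
    Function.Involutive (swapDiscordant W c c') := by
  rintro ⟨x, y⟩
  by_cases hy : W y < W c <;> by_cases hx : W c' < W x <;>
    simp [swapDiscordant, hx, hy, swap_lt_left_iff W hW, lt_swap_right_iff W hW]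

theorem swapDiscordant_discordant {γ : Type*} [LinearOrder γ] (V : α → γ)
    (hV : V c' < V c) (hW : W c < W c') {p : α × α}
    (hVp : V (Equiv.swap c c' p.1) < V (Equiv.swap c c' p.2)) (hWp : W p.2 < W p.1) :
    V (swapDiscordant W c c' p).1 < V (swapDiscordant W c c' p).2 ∧
      W (swapDiscordant W c c' p).2 < W (swapDiscordant W c c' p).1 := by
  simp only [swapDiscordant, Equiv.swap_apply_def] at *
  split_ifs at * <;> grind

end Swap

theorem KT_mul_swap_le {m : ℕ} (V W : Ranking m) {c c' : Fin m} (hV : V c' < V c)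
    (hW : W c < W c') : KT (V * Equiv.swap c c') W ≤ KT V W := by
  unfold KT
  refine card_le_card_of_injOn (swapDiscordant W c c') ?_
    (swapDiscordant_involutive W hW).injective.injOn
  intro p hp
  rw [mem_coe, mem_filter] at hp ⊢
  exact ⟨mem_univ _, swapDiscordant_discordant W V hV hW hp.2.1 hp.2.2⟩

section Mallows

variable {m : ℕ} {φ : ℝ} (hφ0 : 0 ≤ φ) (W : Ranking m)
include hφ0

theorem mallows1_nonneg (V : Ranking m) : 0 ≤ mallows1 φ W V :=
  div_nonneg (pow_nonneg hφ0 _) (sum_nonneg fun _ _ => pow_nonneg hφ0 _)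

theorem mallows1_le_of_KT_le (hφ1 : φ ≤ 1) {V V' : Ranking m} (h : KT V' W ≤ KT V W) :
    mallows1 φ W V ≤ mallows1 φ W V' :=
  div_le_div_of_nonneg_right (pow_le_pow_of_le_one hφ0 hφ1 h)
    (sum_nonneg fun _ _ => pow_nonneg hφ0 _)

end Mallows

theorem wset1_mul_perm {m : ℕ} (V σ : Ranking m) (C : Finset (Fin m)) (a : Fin m) :
    wset1 (V * σ) C a = wset1 V (C.map σ.toEmbedding) (σ a) := by
  unfold wset1
  rw [sum_map]
  rfl

theorem wset1_insert {m : ℕ} (V : Ranking m) {a c : Fin m} {D : Finset (Fin m)} (hcD : c ∉ D) :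
    wset1 V (insert c D) a = (if V c < V a then 1 else -1) + wset1 V D a :=
  sum_insert hcD

theorem map_swap_insert {α : Type*} [DecidableEq α] {c c' : α} {D : Finset α} (hcD : c ∉ D)
    (hc'D : c' ∉ D) : (insert c D).map (Equiv.swap c c').toEmbedding = insert c' D := by
  ext x
  simp only [mem_map_equiv, mem_insert, Equiv.symm_swap, Equiv.swap_apply_def]
  grind

theorem wset1_mul_swap_insert {m : ℕ} (V : Ranking m) {a c c' : Fin m} (hac : a ≠ c)
    (hac' : a ≠ c') {D : Finset (Fin m)} (hcD : c ∉ D) (hc'D : c' ∉ D) :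
    wset1 (V * Equiv.swap c c') (insert c D) a = wset1 V (insert c' D) a := by
  rw [wset1_mul_perm, map_swap_insert hcD hc'D, Equiv.swap_apply_of_ne_of_ne hac hac']

/-- `π_W({V : w_V(C≻a) ≥ K})`. -/
noncomputable def mallowsTailProb {m : ℕ} (φ : ℝ) (W : Ranking m) (a : Fin m) (K : ℤ)
    (C : Finset (Fin m)) : ℝ :=
  ∑ V ∈ univ.filter (fun V : Ranking m => K ≤ wset1 V C a), mallows1 φ W V

section TailProb

variable {m : ℕ} {φ : ℝ} (hφ0 : 0 ≤ φ) (hφ1 : φ ≤ 1) (W : Ranking m) (K : ℤ)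
  {a : Fin m}
include hφ0 hφ1

theorem mallowsTailProb_insert_le_insert {c c' : Fin m} (hW : W c < W c') (hac : a ≠ c)
    (hac' : a ≠ c') {D : Finset (Fin m)} (hcD : c ∉ D) (hc'D : c' ∉ D) :
    mallowsTailProb φ W a K (insert c' D) ≤ mallowsTailProb φ W a K (insert c D) := by
  have hswap (V : Ranking m) : wset1 (V * Equiv.swap c c') (insert c D) a =
      wset1 V (insert c' D) a :=
    wset1_mul_swap_insert V hac hac' hcD hc'D
  have hswap' (V : Ranking m) : wset1 (V * Equiv.swap c c') (insert c' D) a =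
      wset1 V (insert c D) a := by
    rw [Equiv.swap_comm, wset1_mul_swap_insert V hac' hac hc'D hcD]
  refine sum_le_sum_of_injOn_sdiff (· * Equiv.swap c c') (mul_left_injective _).injOn ?_
    (fun V _ => mallows1_nonneg hφ0 W V) ?_
  · intro V hV
    simpa only [coe_sdiff, coe_filter, mem_univ, true_and, Set.mem_sdiff, Set.mem_ofPred_eq,
      hswap, hswap'] using hV
  · intro V hV
    simp only [mem_sdiff, mem_filter, mem_univ, true_and, not_le] at hV
    obtain ⟨hC', hC⟩ := hV
    rw [wset1_insert V hc'D] at hC'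
    rw [wset1_insert V hcD] at hC
    -- only the terms of `c` and `c'` differ, so `V` ranks `c'` above `a` above `c`
    have hVc'a : V c' < V a := by
      by_contra h
      rw [if_neg h] at hC'
      split_ifs at hC <;> omega
    have hVca : ¬V c < V a := fun h => by
      rw [if_pos h] at hC
      rw [if_pos hVc'a] at hC'
      omega
    have hVac : V a < V c := lt_of_le_of_ne (not_lt.1 hVca) (V.injective.ne hac)
    exact mallows1_le_of_KT_le hφ0 W hφ1 (KT_mul_swap_le V W (hVc'a.trans hVac) hW)

theorem mallowsTailProb_sdiff_union_image_le {f : Fin m → Fin m} {C S : Finset (Fin m)}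
    (hSC : S ⊆ C) (hf : Set.InjOn f S) (hfW : ∀ s ∈ S, W s < W (f s))
    (hdisj : Disjoint (S.image f) C) (haC : a ∉ C) (haf : a ∉ S.image f) :
    mallowsTailProb φ W a K (C \ S ∪ S.image f) ≤ mallowsTailProb φ W a K C := by
  induction S using Finset.induction_on with
  | empty => simp
  | insert s S hsS ih =>
    have hsC : s ∈ C := hSC (mem_insert_self s S)
    have hfs : f s ∈ (insert s S).image f := mem_image_of_mem f (mem_insert_self s S)
    have hfsC : f s ∉ C := disjoint_left.1 hdisj hfs
    have hfsS : f s ∉ S.image f := fun h => by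
      obtain ⟨t, htS, hts⟩ := mem_image.1 h
      exact hsS (hf (by simp [htS]) (by simp) hts ▸ htS)
    set C₁ := C \ S ∪ S.image f
    have hC₁ : C \ insert s S ∪ (insert s S).image f = insert (f s) (C₁.erase s) := by
      ext x
      simp only [C₁, mem_union, mem_sdiff, mem_insert, mem_erase, image_insert]
      grind
    have hfsC₁ : f s ∉ C₁.erase s := fun h => by
      rcases mem_union.1 (mem_of_mem_erase h) with h | h
      exacts [hfsC (mem_sdiff.1 h).1, hfsS h]
    have hsC₁ : s ∈ C₁ := mem_union_left _ (mem_sdiff.2 ⟨hsC, hsS⟩)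
    calc mallowsTailProb φ W a K (C \ insert s S ∪ (insert s S).image f)
        = mallowsTailProb φ W a K (insert (f s) (C₁.erase s)) := by rw [hC₁]
      _ ≤ mallowsTailProb φ W a K (insert s (C₁.erase s)) :=
          mallowsTailProb_insert_le_insert hφ0 hφ1 W K (hfW s (mem_insert_self s S))
            (ne_of_mem_of_not_mem hsC haC).symm (ne_of_mem_of_not_mem hfs haf).symm
            (notMem_erase s C₁) hfsC₁
      _ = mallowsTailProb φ W a K C₁ := by rw [insert_erase hsC₁]
      _ ≤ mallowsTailProb φ W a K C :=
          ih ((subset_insert s S).trans hSC) (hf.mono (by simp))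
            (fun t ht => hfW t (mem_insert_of_mem ht))
            (disjoint_of_subset_left (image_subset_image (subset_insert s S)) hdisj)
            fun h => haf (image_subset_image (subset_insert s S) h)

end TailProb

theorem Dominates.exists_injOn_image {m : ℕ} {W : Ranking m} {C C' : Finset (Fin m)}
    (h : Dominates W C C') : ∃ f : Fin m → Fin m, Set.InjOn f ↑(C \ C') ∧
      (C \ C').image f = C' \ C ∧ ∀ c ∈ C \ C', W c < W (f c) := by
  rcases h with rfl | ⟨F, hF⟩
  · exact ⟨id, Set.injOn_id _, by simp, by simp⟩
  classical
  let f (x : Fin m) : Fin m := if hx : x ∈ C \ C' then F ⟨x, hx⟩ else x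
  have hf {x : Fin m} (hx : x ∈ C \ C') : f x = F ⟨x, hx⟩ := dif_pos hx
  refine ⟨f, fun x hx y hy hxy => ?_, ?_, fun x hx => hf hx ▸ hF ⟨x, hx⟩⟩
  · rw [hf hx, hf hy] at hxy
    exact congrArg Subtype.val (F.injective (Subtype.ext hxy))
  · ext y
    refine ⟨fun hy => ?_, fun hy => ?_⟩
    · obtain ⟨x, hx, rfl⟩ := mem_image.1 hy
      exact hf hx ▸ (F ⟨x, hx⟩).2
    · refine mem_image.2 ⟨(F.symm ⟨y, hy⟩).1, (F.symm ⟨y, hy⟩).2, ?_⟩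
      rw [hf (F.symm ⟨y, hy⟩).2, Subtype.coe_eta, F.apply_symm_apply]

theorem stmt1_general (m : ℕ) (φ : ℝ) (hφ0 : 0 < φ) (hφ1 : φ < 1) (K : ℤ)
    (a : Fin m) (W : Ranking m) (C C' : Finset (Fin m))
    (haC : a ∉ C) (haC' : a ∉ C')
    (hdom : Dominates W C C') :
    ∑ V ∈ Finset.univ.filter (fun V : Ranking m => K ≤ wset1 V C' a), mallows1 φ W V ≤
      ∑ V ∈ Finset.univ.filter (fun V : Ranking m => K ≤ wset1 V C a), mallows1 φ W V := by
  obtain ⟨f, hf, himage, hfW⟩ := hdom.exists_injOn_image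
  have hC' : C \ (C \ C') ∪ (C \ C').image f = C' := by
    rw [himage, sdiff_sdiff_self_left, inter_comm, union_comm, sdiff_union_inter]
  have hle := mallowsTailProb_sdiff_union_image_le hφ0.le hφ1.le W K sdiff_subset hf hfW
    (himage ▸ sdiff_disjoint) haC (himage ▸ fun h => haC' (mem_sdiff.1 h).1)
  rwa [hC'] at hle

/-- **Lemma about Mallows' model.** If `C` dominates `C'` w.r.t. `W`, then
`π_W({V : w_V(C'≻a) ≥ K}) ≤ π_W({V : w_V(C≻a) ≥ K})`. -/
theorem stmt1 (m : ℕ) (φ : ℝ) (hφ0 : 0 < φ) (hφ1 : φ < 1) (K : ℤ)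
    (a : Fin m) (W : Ranking m) (C C' : Finset (Fin m))
    (haC : a ∉ C) (haC' : a ∉ C') (hcard : C.card = C'.card)
    (hdom : Dominates W C C') :
    ∑ V ∈ Finset.univ.filter (fun V : Ranking m => K ≤ wset1 V C' a), mallows1 φ W V ≤
      ∑ V ∈ Finset.univ.filter (fun V : Ranking m => K ≤ wset1 V C a), mallows1 φ W V :=
  stmt1_general m φ hφ0 hφ1 K a W C C' haC haC' hdom

end Voting
end

section
/- Under Mallows' model with m ≥ 2 alternatives and n i.i.d. samples, for any alternative a and any 0<α<1, there exist K ∈ ℝ and Γ ∈ [0,1] such that the test f defined on profiles P ∈ ℒ(𝒜)^n by f(P)=1 if w_P(a≻others)>K, f(P)=0 if w_P(a≻others)<K, and f(P)=Γ if w_P(a≻others)=K, has Size(f)=α over H₀ = L_{others≻a} and is a level-α UMP test for H₀ = L_{others≻a} vs H₁ = L_{a≻others}. -/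
namespace Voting

open Finset

section Generic

variable {S Θ : Type*} [Fintype S] [Fintype Θ]

/-- `Size π f θ` : the probability that test `f` rejects when the ground truth is `θ`. -/
noncomputable def Size (π : Θ → S → ℝ) (f : S → ℝ) (θ : Θ) : ℝ :=
  ∑ P, π θ P * f P

/-- `Power π f θ` : the power of test `f` at parameter `θ`. -/
noncomputable def Power (π : Θ → S → ℝ) (f : S → ℝ) (θ : Θ) : ℝ :=
  ∑ P, π θ P * f P

/-- A (randomized) test is a critical function with values in `[0,1]`. -/
def IsTest (f : S → ℝ) : Prop := ∀ P, 0 ≤ f P ∧ f P ≤ 1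

/-- `Size(f) ≤ α` over the null hypothesis `H0`. -/
def SizeLe (π : Θ → S → ℝ) (H0 : Set Θ) (f : S → ℝ) (α : ℝ) : Prop :=
  ∀ h0 ∈ H0, Size π f h0 ≤ α

/-- `Size(f) = α` over the null hypothesis `H0` (the max over `H0` equals `α`). -/
def SizeEq (π : Θ → S → ℝ) (H0 : Set Θ) (f : S → ℝ) (α : ℝ) : Prop :=
  SizeLe π H0 f α ∧ ∃ h0 ∈ H0, Size π f h0 = α

/-- `f` is a level-`α` most powerful test for `H0` vs the simple alternative `h1`. -/
def IsMostPowerful (π : Θ → S → ℝ) (H0 : Set Θ) (h1 : Θ) (α : ℝ) (f : S → ℝ) : Prop :=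
  IsTest f ∧ SizeLe π H0 f α ∧
    ∀ g : S → ℝ, IsTest g → SizeLe π H0 g α → Power π g h1 ≤ Power π f h1

/-- `f` is a level-`α` uniformly most powerful test for `H0` vs `H1`. -/
def IsUMP (π : Θ → S → ℝ) (H0 H1 : Set Θ) (α : ℝ) (f : S → ℝ) : Prop :=
  ∀ h1 ∈ H1, IsMostPowerful π H0 h1 α f

end Generic

/-- `w_P(a≻others) = Σ_{b≠a} w_P(a≻b)`. -/
def wOthers {m n : ℕ} (P : Fin n → Ranking m) (a : Fin m) : ℤ :=
  ∑ b ∈ Finset.univ.erase a, wpair P a b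

/-- The threshold test on the statistic `w_P(a≻others)`. -/
noncomputable def aTest {m : ℕ} (n : ℕ) (a : Fin m) (K Γ : ℝ) :
    (Fin n → Ranking m) → ℝ :=
  fun P =>
    if K < ((wOthers P a : ℤ) : ℝ) then 1
    else if ((wOthers P a : ℤ) : ℝ) < K then 0
    else Γ


/-!
Let `W₁` be obtained from a ranking `W₀` that puts `a` last by moving `a` to the top, keeping
the order of the other alternatives. Only the pairs containing `a` change, so
`KT(V, W₁) = KT(V, W₀) - (#{b : a ≻_V b} - #{b : b ≻_V a})`, and the partition function
does not depend on the centre; hence `π_{W₁}(P) = φ ^ (-w_P(a≻others)) · π_{W₀}(P)`.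
Since `φ < 1` this likelihood ratio increases with the statistic, and every
`W₁ ∈ L_{a≻others}` arises this way (rotate the positions), so the Neyman–Pearson argument
for `W₀` against `W₁` shows that the threshold test is most powerful. Any two rankings
putting `a` last differ by a relabelling that fixes `a`, which preserves both the Mallows
weights and the statistic; so the size of the test is the same at every null ranking, and
`K`, `Γ` are calibrated at one of them.
-/

section NeymanPearson

variable {S Θ : Type*} [Fintype S] {π : Θ → S → ℝ}

theorem isMostPowerful_of_likelihoodRatio {H0 : Set Θ} {h0 h1 : Θ} {α c : ℝ} {f : S → ℝ}
    (hf : IsTest f) (hsize : SizeLe π H0 f α) (hh0 : h0 ∈ H0) (hfh0 : Size π f h0 = α)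
    (hc : 0 ≤ c) (hlt : ∀ P, f P < 1 → π h1 P ≤ c * π h0 P)
    (hpos : ∀ P, 0 < f P → c * π h0 P ≤ π h1 P) :
    IsMostPowerful π H0 h1 α f := by
  refine ⟨hf, hsize, fun g hg hgsize => ?_⟩
  have hterm : ∀ P, 0 ≤ (f P - g P) * (π h1 P - c * π h0 P) := by
    intro P
    rcases lt_trichotomy (f P) (g P) with h | h | h
    · exact mul_nonneg_of_nonpos_of_nonpos (by linarith)
        (sub_nonpos.mpr (hlt P (h.trans_le (hg P).2)))
    · simp [h]
    · exact mul_nonneg (by linarith) (sub_nonneg.mpr (hpos P ((hg P).1.trans_lt h)))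
  have hexpand : ∑ P, (f P - g P) * (π h1 P - c * π h0 P)
      = (Power π f h1 - Power π g h1) - c * (Size π f h0 - Size π g h0) := by
    simp only [Power, Size, mul_sub, mul_sum, ← sum_sub_distrib]
    exact sum_congr rfl fun P _ => by ring
  have hsum := sum_nonneg fun P (_ : P ∈ univ) => hterm P
  rw [hexpand, hfh0] at hsum
  nlinarith [mul_nonneg hc (sub_nonneg.mpr (hgsize h0 hh0))]

end NeymanPearson

theorem exists_threshold_randomization {S : Type*} [Fintype S] (μ : S → ℝ)
    (hμ : ∑ s, μ s = 1) (T : S → ℤ) {α : ℝ} (hα0 : 0 ≤ α) (hα1 : α < 1) :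
    ∃ K : ℤ, ∃ Γ : ℝ, 0 ≤ Γ ∧ Γ ≤ 1 ∧
      (∑ s with K < T s, μ s) + Γ * ∑ s with T s = K, μ s = α := by
  set F : ℤ → ℝ := fun t => ∑ s with t < T s, μ s
  obtain ⟨B, hB⟩ : ∃ B : ℤ, ∀ s, |T s| ≤ B :=
    ⟨∑ s, |T s|, fun s => single_le_sum (fun t _ => abs_nonneg (T t)) (mem_univ s)⟩
  have hbdd : ∀ t, F t ≤ α → -B ≤ t := by
    intro t ht
    by_contra! h
    have hall : ∀ s, t < T s := fun s => by linarith [neg_abs_le (T s), hB s]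
    simp only [F, filter_true_of_mem fun s _ => hall s, hμ] at ht
    linarith
  have htop : F B ≤ α := by
    have hnone : ∀ s, ¬ B < T s := fun s => not_lt.mpr ((le_abs_self _).trans (hB s))
    simpa [F, filter_false_of_mem fun s _ => hnone s] using hα0
  obtain ⟨K, hK, hKmin⟩ := Int.exists_least_of_bdd ⟨-B, hbdd⟩ ⟨B, htop⟩
  have hprev : α < F (K - 1) := lt_of_not_ge fun h => by linarith [hKmin _ h]
  have hsplit : F (K - 1) = F K + ∑ s with T s = K, μ s := by
    simp only [F, sum_filter, ← sum_add_distrib]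
    refine sum_congr rfl fun s _ => ?_
    split_ifs <;> first | omega | simp
  set E := ∑ s with T s = K, μ s
  have hE : 0 < E := by linarith
  refine ⟨K, (α - F K) / E, div_nonneg (by linarith) hE.le,
    (div_le_one hE).mpr (by linarith), ?_⟩
  simp only [F]
  field_simp
  ring

section Mallows

variable {m : ℕ}

theorem KT_mul_right (V W σ : Ranking m) : KT (V * σ) (W * σ) = KT V W :=
  card_equiv (σ.prodCongr σ) fun p => by
    simp only [mem_filter, mem_univ, true_and]; rfl

theorem sum_pow_KT_mul_right (φ : ℝ) (W σ : Ranking m) :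
    ∑ U : Ranking m, φ ^ KT U (W * σ) = ∑ U : Ranking m, φ ^ KT U W :=
  (Fintype.sum_equiv (Equiv.mulRight σ) _ _ fun U => by simp [KT_mul_right]).symm

theorem mallows1_mul_right (φ : ℝ) (W V σ : Ranking m) :
    mallows1 φ (W * σ) (V * σ) = mallows1 φ W V := by
  rw [mallows1, mallows1, KT_mul_right, sum_pow_KT_mul_right]

theorem mallows_mul_right (φ : ℝ) {n : ℕ} (W σ : Ranking m) (P : Fin n → Ranking m) :
    mallows φ n (W * σ) (fun i => P i * σ) = mallows φ n W P := by
  simp only [mallows, mallows1_mul_right]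

theorem mallows1_pos {φ : ℝ} (hφ : 0 < φ) (W V : Ranking m) : 0 < mallows1 φ W V :=
  div_pos (pow_pos hφ _) (sum_pos (fun _ _ => pow_pos hφ _) univ_nonempty)

theorem mallows_nonneg {φ : ℝ} (hφ : 0 < φ) (n : ℕ) (W : Ranking m)
    (P : Fin n → Ranking m) :
    0 ≤ mallows φ n W P :=
  prod_nonneg fun i _ => (mallows1_pos hφ W (P i)).le

theorem sum_mallows {φ : ℝ} (hφ : 0 < φ) (n : ℕ) (W : Ranking m) :
    ∑ P : Fin n → Ranking m, mallows φ n W P = 1 := by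
  have hZ : 0 < ∑ U : Ranking m, φ ^ KT U W :=
    sum_pos (fun _ _ => pow_pos hφ _) univ_nonempty
  simp only [mallows]
  rw [← Fintype.piFinset_univ, ← prod_univ_sum]
  simp [mallows1, ← sum_div, div_self hZ.ne']

theorem size_mallows_mul_right (φ : ℝ) {n : ℕ} (f : (Fin n → Ranking m) → ℝ)
    (W σ : Ranking m) :
    Size (mallows φ n) f (W * σ) = Size (mallows φ n) (fun P => f fun i => P i * σ) W := by
  refine (Fintype.sum_equiv (Equiv.piCongrRight fun _ => Equiv.mulRight σ) _ _ fun P => ?_).symm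
  rw [← mallows_mul_right φ W σ P]
  rfl

end Mallows

section MoveToTop

variable {m : ℕ}

def MovedToTop (a : Fin m) (W0 W1 : Ranking m) : Prop :=
  W0 ∈ Lbot a ∧ W1 ∈ Ltop a ∧ ∀ b c, b ≠ a → c ≠ a → (W1 b < W1 c ↔ W0 b < W0 c)

theorem KT_add_card_of_movedToTop {a : Fin m} {W0 W1 : Ranking m} (h : MovedToTop a W0 W1)
    (V : Ranking m) :
    KT V W1 + #{b | V a < V b} = KT V W0 + #{b | V b < V a} := by
  obtain ⟨h0, h1, hord⟩ := h
  have hpair : ∀ p : Fin m × Fin m,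
      (if V p.1 < V p.2 ∧ W1 p.2 < W1 p.1 then 1 else 0)
          + (if p.1 = a ∧ V p.1 < V p.2 then 1 else 0)
        = (if V p.1 < V p.2 ∧ W0 p.2 < W0 p.1 then 1 else 0)
          + (if p.2 = a ∧ V p.1 < V p.2 then 1 else 0) := by
    rintro ⟨b, c⟩
    by_cases hb : b = a <;> by_cases hc : c = a
    · simp [hb, hc]
    · simp [hb, hc, h0 c hc, (h1 c hc).not_gt]
    · simp [hb, hc, h1 b hb, (h0 b hb).not_gt]
    · simp [hb, hc, hord c b hc hb]
  have habove :
      #{b | V a < V b} = ∑ p : Fin m × Fin m, if p.1 = a ∧ V p.1 < V p.2 then 1 else 0 := by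
    rw [Fintype.sum_prod_type, Fintype.sum_eq_single a fun x hx => by simp [hx]]
    simp
  have hbelow :
      #{b | V b < V a} = ∑ p : Fin m × Fin m, if p.2 = a ∧ V p.1 < V p.2 then 1 else 0 := by
    rw [Fintype.sum_prod_type_right, Fintype.sum_eq_single a fun x hx => by simp [hx]]
    simp
  rw [habove, hbelow, KT, KT, card_filter, card_filter, ← sum_add_distrib, ← sum_add_distrib]
  exact sum_congr rfl fun p _ => hpair p

theorem wOthers_eq_sum {n : ℕ} (P : Fin n → Ranking m) (a : Fin m) :
    wOthers P a = ∑ i, ((#{b | P i a < P i b} : ℤ) - #{b | P i b < P i a}) := by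
  rw [wOthers, sum_erase _ (by simp [wpair])]
  simp only [wpair, card_filter, Nat.cast_sum, Nat.cast_ite, Nat.cast_one, Nat.cast_zero,
    ← sum_sub_distrib]
  exact sum_comm

theorem wOthers_mul_right {n : ℕ} {a : Fin m} {σ : Ranking m} (hσ : σ a = a)
    (P : Fin n → Ranking m) :
    wOthers (fun i => P i * σ) a = wOthers P a := by
  refine sum_equiv σ (fun b => by simpa using (σ.injective.ne_iff' hσ).symm) fun b _ => ?_
  simp [wpair, hσ]

theorem mallows1_mul_pow_of_movedToTop {φ : ℝ} {a : Fin m} {W0 W1 : Ranking m}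
    (h : MovedToTop a W0 W1) (V : Ranking m) :
    mallows1 φ W1 V * φ ^ #{b | V a < V b} = φ ^ #{b | V b < V a} * mallows1 φ W0 V := by
  have hZ : ∑ U : Ranking m, φ ^ KT U W1 = ∑ U : Ranking m, φ ^ KT U W0 := by
    simpa using sum_pow_KT_mul_right φ W0 (W0⁻¹ * W1)
  rw [mallows1, mallows1, hZ, div_mul_eq_mul_div, mul_div_assoc', ← pow_add, ← pow_add,
    KT_add_card_of_movedToTop h, add_comm]

theorem mallows_eq_zpow_mul_of_movedToTop {φ : ℝ} (hφ : 0 < φ) {n : ℕ} {a : Fin m}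
    {W0 W1 : Ranking m} (h : MovedToTop a W0 W1) (P : Fin n → Ranking m) :
    mallows φ n W1 P = φ ^ (-wOthers P a) * mallows φ n W0 P := by
  have hprod : mallows φ n W1 P * φ ^ (∑ i, #{b | P i a < P i b})
      = φ ^ (∑ i, #{b | P i b < P i a}) * mallows φ n W0 P := by
    simp only [mallows, ← prod_pow_eq_pow_sum, ← prod_mul_distrib,
      mallows1_mul_pow_of_movedToTop h]
  have hw : -wOthers P a
      = ((∑ i, #{b | P i b < P i a} : ℕ) : ℤ) - (∑ i, #{b | P i a < P i b} : ℕ) := by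
    rw [wOthers_eq_sum]
    push_cast
    rw [sum_sub_distrib]
    ring
  rw [hw, zpow_sub₀ hφ.ne', zpow_natCast, zpow_natCast, div_mul_eq_mul_div, ← hprod,
    mul_div_cancel_right₀ _ (pow_ne_zero _ hφ.ne')]

theorem mallows_le_of_wOthers_le_of_movedToTop {φ : ℝ} (hφ0 : 0 < φ) (hφ1 : φ < 1) {n : ℕ}
    {a : Fin m} {W0 W1 : Ranking m} (h : MovedToTop a W0 W1) {P : Fin n → Ranking m} {K : ℤ}
    (hK : wOthers P a ≤ K) : mallows φ n W1 P ≤ φ ^ (-K) * mallows φ n W0 P := by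
  rw [mallows_eq_zpow_mul_of_movedToTop hφ0 h]
  exact mul_le_mul_of_nonneg_right (zpow_le_zpow_right_of_le_one₀ hφ0 hφ1.le (neg_le_neg hK))
    (mallows_nonneg hφ0 n W0 P)

theorem le_mallows_of_le_wOthers_of_movedToTop {φ : ℝ} (hφ0 : 0 < φ) (hφ1 : φ < 1) {n : ℕ}
    {a : Fin m} {W0 W1 : Ranking m} (h : MovedToTop a W0 W1) {P : Fin n → Ranking m} {K : ℤ}
    (hK : K ≤ wOthers P a) : φ ^ (-K) * mallows φ n W0 P ≤ mallows φ n W1 P := by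
  rw [mallows_eq_zpow_mul_of_movedToTop hφ0 h]
  exact mul_le_mul_of_nonneg_right (zpow_le_zpow_right_of_le_one₀ hφ0 hφ1.le (neg_le_neg hK))
    (mallows_nonneg hφ0 n W0 P)

end MoveToTop

section Positions

variable {k : ℕ} {a : Fin (k + 1)} {W : Ranking (k + 1)}

theorem mem_Lbot_iff : W ∈ Lbot a ↔ W a = Fin.last k := by
  refine ⟨fun h => ?_, fun h b hb => ?_⟩
  · by_contra hne
    have hlast : W.symm (Fin.last k) ≠ a := fun h' => hne (by rw [← h', W.apply_symm_apply])
    exact absurd (h _ hlast) (by simpa using Fin.le_last (W a))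
  · rw [h]
    exact lt_of_le_of_ne (Fin.le_last _) fun he => hb (W.injective (he.trans h.symm))

theorem mem_Ltop_iff : W ∈ Ltop a ↔ W a = 0 := by
  refine ⟨fun h => ?_, fun h b hb => ?_⟩
  · by_contra hne
    have hzero : W.symm 0 ≠ a := fun h' => hne (by rw [← h', W.apply_symm_apply])
    simpa using h _ hzero
  · rw [h]
    exact lt_of_le_of_ne (Fin.zero_le _) fun he => hb (W.injective (h.trans he).symm)

theorem swap_mem_Lbot (a : Fin (k + 1)) : Equiv.swap a (Fin.last k) ∈ Lbot a :=
  mem_Lbot_iff.mpr (Equiv.swap_apply_left _ _)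

theorem exists_movedToTop (h : W ∈ Ltop a) : ∃ W0, MovedToTop a W0 W := by
  set W0 := (finRotate (k + 1))⁻¹ * W
  have hW : W = finRotate (k + 1) * W0 := by simp [W0]
  have hW0 : W0 ∈ Lbot a := by
    rw [mem_Lbot_iff, ← (finRotate (k + 1)).injective.eq_iff, ← Equiv.Perm.mul_apply, ← hW,
      finRotate_last]
    exact mem_Ltop_iff.mp h
  have hsucc : ∀ b, b ≠ a → (W b : ℕ) = W0 b + 1 := fun b hb => by
    rw [hW, Equiv.Perm.mul_apply, coe_finRotate_of_ne_last]
    exact fun he => hb (W0.injective (he.trans (mem_Lbot_iff.mp hW0).symm))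
  refine ⟨W0, hW0, h, fun b c hb hc => ?_⟩
  rw [Fin.lt_def, Fin.lt_def, hsucc b hb, hsucc c hc]
  omega

end Positions

section ThresholdTest

variable {m n : ℕ} {a : Fin m} {Γ : ℝ}

theorem aTest_of_lt {K : ℤ} {P : Fin n → Ranking m} (h : K < wOthers P a) :
    aTest n a K Γ P = 1 := by
  simp [aTest, h]

theorem aTest_of_gt {K : ℤ} {P : Fin n → Ranking m} (h : wOthers P a < K) :
    aTest n a K Γ P = 0 := by
  simp [aTest, h, h.not_gt]

theorem aTest_of_eq {K : ℤ} {P : Fin n → Ranking m} (h : wOthers P a = K) :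
    aTest n a K Γ P = Γ := by
  simp [aTest, h]

theorem wOthers_le_of_aTest_lt_one {K : ℤ} {P : Fin n → Ranking m}
    (h : aTest n a K Γ P < 1) : wOthers P a ≤ K :=
  not_lt.mp fun hK => h.ne (aTest_of_lt hK)

theorem le_wOthers_of_aTest_pos {K : ℤ} {P : Fin n → Ranking m}
    (h : 0 < aTest n a K Γ P) : K ≤ wOthers P a :=
  not_lt.mp fun hK => h.ne' (aTest_of_gt hK)

theorem isTest_aTest {K : ℝ} (hΓ0 : 0 ≤ Γ) (hΓ1 : Γ ≤ 1) : IsTest (aTest n a K Γ) := by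
  intro P
  unfold aTest
  split_ifs <;> simp [hΓ0, hΓ1]

theorem size_aTest (π : Ranking m → (Fin n → Ranking m) → ℝ) (K : ℤ) (W : Ranking m) :
    Size π (aTest n a K Γ) W
      = (∑ P with K < wOthers P a, π W P) + Γ * ∑ P with wOthers P a = K, π W P := by
  simp only [Size, sum_filter, mul_sum, ← sum_add_distrib]
  refine sum_congr rfl fun P _ => ?_
  rcases lt_trichotomy (wOthers P a) K with h | h | h
  · simp [aTest_of_gt h, h.not_gt, h.ne]
  · simp [aTest_of_eq h, h, mul_comm]
  · simp [aTest_of_lt h, h, h.ne']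
end ThresholdTest

theorem size_aTest_eq_of_mem_Lbot (φ : ℝ) {k n : ℕ} {a : Fin (k + 1)} (K Γ : ℝ)
    {W W' : Ranking (k + 1)} (hW : W ∈ Lbot a) (hW' : W' ∈ Lbot a) :
    Size (mallows φ n) (aTest n a K Γ) W' = Size (mallows φ n) (aTest n a K Γ) W := by
  have hσ : (W⁻¹ * W') a = a := by
    rw [Equiv.Perm.mul_apply, mem_Lbot_iff.mp hW', ← mem_Lbot_iff.mp hW]
    exact W.symm_apply_apply a
  rw [← mul_inv_cancel_left W W', size_mallows_mul_right]
  congr 1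
  ext P
  simp only [aTest, wOthers_mul_right hσ]

theorem stmt3_general (m n : ℕ) (φ : ℝ) (hφ0 : 0 < φ) (hφ1 : φ < 1)
    (α : ℝ) (hα0 : 0 < α) (hα1 : α < 1) (a : Fin m) :
    ∃ K Γ : ℝ, 0 ≤ Γ ∧ Γ ≤ 1 ∧
      SizeEq (mallows φ n) (Lbot a) (aTest n a K Γ) α ∧
      IsUMP (mallows φ n) (Lbot a) (Ltop a) α (aTest n a K Γ) := by
  obtain ⟨k, rfl⟩ := Nat.exists_eq_add_one.mpr a.pos
  set W := Equiv.swap a (Fin.last k)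
  have hW : W ∈ Lbot a := swap_mem_Lbot a
  obtain ⟨K, Γ, hΓ0, hΓ1, hK⟩ := exists_threshold_randomization (mallows φ n W)
    (sum_mallows hφ0 n W) (wOthers · a) hα0.le hα1
  have hsize : ∀ W' ∈ Lbot a, Size (mallows φ n) (aTest n a K Γ) W' = α := fun W' hW' => by
    rw [size_aTest_eq_of_mem_Lbot φ K Γ hW hW', size_aTest, hK]
  have hsizeLe : SizeLe (mallows φ n) (Lbot a) (aTest n a K Γ) α :=
    fun W' hW' => (hsize W' hW').le
  refine ⟨K, Γ, hΓ0, hΓ1, ⟨hsizeLe, W, hW, hsize W hW⟩, fun W1 hW1 => ?_⟩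
  obtain ⟨W0, hmove⟩ := exists_movedToTop hW1
  exact isMostPowerful_of_likelihoodRatio (isTest_aTest hΓ0 hΓ1) hsizeLe hmove.1
    (hsize W0 hmove.1) (zpow_pos hφ0 (-K)).le
    (fun P hP => mallows_le_of_wOthers_le_of_movedToTop hφ0 hφ1 hmove
      (wOthers_le_of_aTest_lt_one hP))
    (fun P hP => le_mallows_of_le_wOthers_of_movedToTop hφ0 hφ1 hmove
      (le_wOthers_of_aTest_pos hP))

/-- **A UMP winner test under Mallows.** For any `a` and `0<α<1` there exist
`K` and `Γ ∈ [0,1]` such that the threshold test on `w_P(a≻others)` has size exactly `α`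
over `H₀ = L_{others≻a}` and is a level-`α` UMP test for `H₀ = L_{others≻a}` vs
`H₁ = L_{a≻others}`. -/
theorem stmt3 (m n : ℕ) (hm : 2 ≤ m) (φ : ℝ) (hφ0 : 0 < φ) (hφ1 : φ < 1)
    (α : ℝ) (hα0 : 0 < α) (hα1 : α < 1) (a : Fin m) :
    ∃ K Γ : ℝ, 0 ≤ Γ ∧ Γ ≤ 1 ∧
      SizeEq (mallows φ n) (Lbot a) (aTest n a K Γ) α ∧
      IsUMP (mallows φ n) (Lbot a) (Ltop a) α (aTest n a K Γ) :=
  stmt3_general m n φ hφ0 hφ1 α hα0 hα1 a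

end Voting
end

section
/- Given Condorcet's model with m ≥ 2 alternatives and n ≥ 2 i.i.d. samples, an alternative a ∈ 𝒜, and a nonempty set H₁ ⊆ ℬ(𝒜)∖R_{a≻others}: there exists a level-α UMP test for H₀ = R_{a≻others} vs H₁ for every 0<α<1 if and only if there exists B ⊆ 𝒜∖{a} such that H₁ ⊆ R_{B≻a}. Moreover, when H₁ ⊆ R_{B≻a}, for every 0<α<1 there exist K ∈ ℝ and Γ ∈ [0,1] such that the test g defined by g(P)=1 if w_P(B≻a)>K, g(P)=0 if w_P(B≻a)<K, and g(P)=Γ if w_P(B≻a)=K is a level-α UMP test for H₀ vs H₁. -/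
namespace Voting

open Finset

/-- An irreflexive, antisymmetric, total binary relation on `Fin m`. -/
abbrev IsTournament {m : ℕ} (R : Fin m → Fin m → Bool) : Prop :=
  ∀ a b : Fin m, (a = b → R a b = false) ∧ (a ≠ b → R a b = !R b a)

/-- `ℬ(𝒜)` : the set of irreflexive, antisymmetric, total binary relations on `Fin m`;
`R.1 a b = true` means `a ≻_R b`. -/
abbrev Tournament (m : ℕ) := {R : Fin m → Fin m → Bool // IsTournament R}

/-- Kendall-tau distance on binary relations. -/
def KTt {m : ℕ} (V W : Tournament m) : ℕ :=
  (Finset.univ.filter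
    (fun p : Fin m × Fin m => V.1 p.1 p.2 = true ∧ W.1 p.2 p.1 = true)).card

/-- Condorcet single-sample probability of `V` given ground truth `W` and dispersion `φ`. -/
noncomputable def condorcet1 {m : ℕ} (φ : ℝ) (W V : Tournament m) : ℝ :=
  φ ^ KTt V W / ∑ U : Tournament m, φ ^ KTt U W

/-- Condorcet's model with `n` i.i.d. samples. -/
noncomputable def condorcet {m : ℕ} (φ : ℝ) (n : ℕ) :
    Tournament m → (Fin n → Tournament m) → ℝ :=
  fun W P => ∏ i, condorcet1 φ W (P i)

/-- `R_{a≻others}` : binary relations in which `a` is preferred to all other alternatives. -/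
def Rtop {m : ℕ} (a : Fin m) : Set (Tournament m) :=
  {V | ∀ b, b ≠ a → V.1 a b = true}

/-- `w_P(b≻a)` for a profile of binary relations. -/
def wpairT {m n : ℕ} (P : Fin n → Tournament m) (b a : Fin m) : ℤ :=
  ((Finset.univ.filter (fun i => (P i).1 b a = true)).card : ℤ) -
    ((Finset.univ.filter (fun i => (P i).1 a b = true)).card : ℤ)

/-- `w_P(B≻a) = Σ_{b∈B} w_P(b≻a)`. -/
def wsetT {m n : ℕ} (P : Fin n → Tournament m) (B : Finset (Fin m)) (a : Fin m) : ℤ :=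
  ∑ b ∈ B, wpairT P b a

/-- The threshold test on the statistic `w_P(B≻a)` for Condorcet's model. -/
noncomputable def wTestT {m : ℕ} (n : ℕ) (B : Finset (Fin m)) (a : Fin m) (K Γ : ℝ) :
    (Fin n → Tournament m) → ℝ :=
  fun P =>
    if K < ((wsetT P B a : ℤ) : ℝ) then 1
    else if ((wsetT P B a : ℤ) : ℝ) < K then 0
    else Γ


/-- `R_{B≻a}` : binary relations in which the set of alternatives preferred to `a` is
exactly `B`. -/
def RBset {m : ℕ} (B : Finset (Fin m)) (a : Fin m) : Set (Tournament m) :=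
  {V | Finset.univ.filter (fun b => V.1 b a = true) = B}

/-!
Write `V'` for `V` with `a` moved to the top and `B` for the set of alternatives above `a` in `V`.
The Kendall-tau distance from a sample `U` to `V` is its distance to `V'` minus `w_U(B≻a)`, and
the normalising constant does not depend on the centre: flipping `U` on the pairs where two
relations differ is a bijection carrying distances to the one onto distances to the other.
Hence `π_V(P) = φ^{-w_P(B≻a)} π_{V'}(P)`, a likelihood ratio increasing in `w_P(B≻a)`, and by
the same bijection a test that only looks at comparisons with `a` has the same size on all of
`H₀`. The Neyman–Pearson argument then makes the randomized threshold test on `w_P(B≻a)` of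
exact size `α` most powerful against every alternative with the set `B`, and forces every most
powerful test to agree with it off the threshold.

If two alternatives have sets `B₁ ⊄ B₂`, two voters suffice to build profiles `P, Q` along which
`w(B₁≻a)` increases and `w(B₂≻a)` decreases. At a level `α` strictly between the null mass of
`A = {R : w_R(B₂≻a) ≥ w_P(B₂≻a)}` and that of `A ∪ {Q}`, a UMP test has to reject all of `A`
(being most powerful against the second alternative), hence `P`, hence `Q` (against the first),
and so exceeds level `α`.
-/

section Testing

variable {S Θ : Type*}

noncomputable def thresholdTest (T : S → ℝ) (K Γ : ℝ) : S → ℝ :=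
  fun P => if K < T P then 1 else if T P < K then 0 else Γ

lemma isTest_thresholdTest (T : S → ℝ) (K : ℝ) {Γ : ℝ} (h0 : 0 ≤ Γ) (h1 : Γ ≤ 1) :
    IsTest (thresholdTest T K Γ) := fun P => by
  unfold thresholdTest
  split_ifs <;> constructor <;> linarith

lemma thresholdTest_sub_mul_nonneg {T : S → ℝ} {h : ℝ → ℝ} (hh : Monotone h) {f : S → ℝ}
    (hf : IsTest f) (K Γ : ℝ) (P : S) : 0 ≤ (thresholdTest T K Γ P - f P) * (h (T P) - h K) := by
  unfold thresholdTest
  rcases lt_trichotomy K (T P) with hlt | heq | hgt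
  · simp only [if_pos hlt]
    exact mul_nonneg (by linarith [hf P]) (by linarith [hh hlt.le])
  · simp [heq]
  · simp only [if_neg hgt.not_gt, if_pos hgt]
    exact mul_nonneg_of_nonpos_of_nonpos (by linarith [hf P]) (by linarith [hh hgt.le])

variable [Fintype S]

lemma sum_mul_thresholdTest (μ T : S → ℝ) (K Γ : ℝ) :
    ∑ P, μ P * thresholdTest T K Γ P =
      ∑ P with K < T P, μ P + Γ * ∑ P with T P = K, μ P := by
  simp only [Finset.sum_filter, Finset.mul_sum, ← Finset.sum_add_distrib]
  refine Finset.sum_congr rfl fun P _ => ?_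
  unfold thresholdTest
  rcases lt_trichotomy K (T P) with h | h | h
  · simp [h, h.ne']
  · simp [h, mul_comm]
  · simp [h, h.not_gt, h.ne]

lemma sum_mul_thresholdTest_le {μ : S → ℝ} (hμ : ∀ P, 0 ≤ μ P) (T : S → ℝ) (K : ℝ) {Γ : ℝ}
    (hΓ : Γ ≤ 1) : ∑ P, μ P * thresholdTest T K Γ P ≤ ∑ P with K ≤ T P, μ P := by
  rw [Finset.sum_filter]
  refine Finset.sum_le_sum fun P _ => ?_
  unfold thresholdTest
  split_ifs <;> nlinarith [hμ P]

lemma sum_le_sum_mul_of_eq_one {μ f : S → ℝ} (hμ : ∀ P, 0 ≤ μ P) (hf : IsTest f)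
    {s : Finset S} (h : ∀ P ∈ s, f P = 1) : ∑ P ∈ s, μ P ≤ ∑ P, μ P * f P :=
  calc ∑ P ∈ s, μ P = ∑ P ∈ s, μ P * f P :=
        Finset.sum_congr rfl fun P hP => by rw [h P hP, mul_one]
    _ ≤ _ := Finset.sum_le_sum_of_subset_of_nonneg (Finset.subset_univ s) fun P _ _ =>
      mul_nonneg (hμ P) (hf P).1

lemma exists_thresholdTest_sum_eq {μ : S → ℝ} (hμ1 : ∑ P, μ P = 1)
    (T : S → ℝ) {α : ℝ} (hα0 : 0 < α) (hα1 : α ≤ 1) :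
    ∃ K Γ, 0 ≤ Γ ∧ Γ ≤ 1 ∧ ∑ P, μ P * thresholdTest T K Γ P = α := by
  classical
  have hS : (Finset.univ : Finset S).Nonempty := by
    by_contra h
    simp [Finset.not_nonempty_iff_eq_empty.mp h] at hμ1
  -- `K` is the largest value of `T` whose upper tail `{K ≤ T}` still has mass at least `α`.
  obtain ⟨P₀, -, hP₀⟩ := Finset.exists_min_image Finset.univ T hS
  have hcand : (Finset.univ.filter fun P => α ≤ ∑ Q with T P ≤ T Q, μ Q).Nonempty := by
    refine ⟨P₀, Finset.mem_filter.2 ⟨Finset.mem_univ _, ?_⟩⟩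
    rwa [Finset.filter_true_of_mem fun Q _ => hP₀ Q (Finset.mem_univ _), hμ1]
  obtain ⟨P₁, hP₁, hmax⟩ := Finset.exists_max_image _ T hcand
  set K := T P₁
  have hFK : α ≤ ∑ Q with K ≤ T Q, μ Q := (Finset.mem_filter.1 hP₁).2
  have hGK : ∑ Q with K < T Q, μ Q < α := by
    by_contra! h
    have hne : (Finset.univ.filter fun Q => K < T Q).Nonempty := by
      by_contra h'
      rw [Finset.not_nonempty_iff_eq_empty.mp h', Finset.sum_empty] at h
      linarith
    obtain ⟨P₂, hP₂, hmin⟩ := Finset.exists_min_image _ T hne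
    have hK₂ : K < T P₂ := (Finset.mem_filter.1 hP₂).2
    have htail : ∑ Q with T P₂ ≤ T Q, μ Q = ∑ Q with K < T Q, μ Q := by
      refine Finset.sum_congr (Finset.filter_congr fun Q _ => ?_) fun _ _ => rfl
      exact ⟨hK₂.trans_le, fun hQ => hmin Q (Finset.mem_filter.2 ⟨Finset.mem_univ _, hQ⟩)⟩
    exact (hmax P₂ (Finset.mem_filter.2 ⟨Finset.mem_univ _, htail ▸ h⟩)).not_gt hK₂
  have hsplit : ∑ Q with K ≤ T Q, μ Q = ∑ Q with K < T Q, μ Q + ∑ Q with T Q = K, μ Q := by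
    rw [← Finset.sum_union (Finset.disjoint_filter.2 fun Q _ h h' => h.ne' h')]
    exact Finset.sum_congr (by ext Q; simp [le_iff_lt_or_eq, eq_comm]) fun _ _ => rfl
  have hpos : 0 < ∑ Q with T Q = K, μ Q := by linarith
  refine ⟨K, (α - ∑ Q with K < T Q, μ Q) / ∑ Q with T Q = K, μ Q,
    div_nonneg (by linarith) hpos.le, (div_le_one hpos).2 (by linarith), ?_⟩
  rw [sum_mul_thresholdTest, div_mul_cancel₀ _ hpos.ne']
  ring

section LikelihoodRatio

variable (π : Θ → S → ℝ) {θ₀ θ₁ : Θ} {T : S → ℝ} {h : ℝ → ℝ}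

lemma power_sub_power_eq_sum (hratio : ∀ P, π θ₁ P = h (T P) * π θ₀ P) (g f : S → ℝ) (k : ℝ) :
    Power π g θ₁ - Power π f θ₁ - k * (Size π g θ₀ - Size π f θ₀) =
      ∑ P, (g P - f P) * (h (T P) - k) * π θ₀ P := by
  simp only [Power, Size, hratio, Finset.mul_sum, ← Finset.sum_sub_distrib]
  exact Finset.sum_congr rfl fun P _ => by ring

lemma power_le_power_thresholdTest (hh : Monotone h)
    (hratio : ∀ P, π θ₁ P = h (T P) * π θ₀ P) (hπ : ∀ P, 0 ≤ π θ₀ P) {K : ℝ} (hK : 0 ≤ h K)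
    (Γ : ℝ) {f : S → ℝ} (hf : IsTest f)
    (hsize : Size π f θ₀ ≤ Size π (thresholdTest T K Γ) θ₀) :
    Power π f θ₁ ≤ Power π (thresholdTest T K Γ) θ₁ := by
  have key := power_sub_power_eq_sum π hratio (thresholdTest T K Γ) f (h K)
  have hsum : 0 ≤ ∑ P, (thresholdTest T K Γ P - f P) * (h (T P) - h K) * π θ₀ P :=
    Finset.sum_nonneg fun P _ => mul_nonneg (thresholdTest_sub_mul_nonneg hh hf K Γ P) (hπ P)
  nlinarith

lemma eq_thresholdTest_of_power_le (hh : StrictMono h)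
    (hratio : ∀ P, π θ₁ P = h (T P) * π θ₀ P) (hπ : ∀ P, 0 < π θ₀ P) {K : ℝ} (hK : 0 ≤ h K)
    (Γ : ℝ) {f : S → ℝ} (hf : IsTest f)
    (hsize : Size π f θ₀ ≤ Size π (thresholdTest T K Γ) θ₀)
    (hpow : Power π (thresholdTest T K Γ) θ₁ ≤ Power π f θ₁) {P : S} (hP : T P ≠ K) :
    f P = thresholdTest T K Γ P := by
  have key := power_sub_power_eq_sum π hratio (thresholdTest T K Γ) f (h K)
  have hterm : ∀ Q ∈ Finset.univ,
      0 ≤ (thresholdTest T K Γ Q - f Q) * (h (T Q) - h K) * π θ₀ Q := fun Q _ =>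
    mul_nonneg (thresholdTest_sub_mul_nonneg hh.monotone hf K Γ Q) (hπ Q).le
  have hzero := (Finset.sum_eq_zero_iff_of_nonneg hterm).1
    (le_antisymm (by nlinarith) (Finset.sum_nonneg hterm)) P (Finset.mem_univ P)
  have hhP : h (T P) - h K ≠ 0 := sub_ne_zero.2 (hh.injective.ne hP)
  rcases mul_eq_zero.1 hzero with h0 | h0
  · rcases mul_eq_zero.1 h0 with h1 | h1
    · linarith
    · exact absurd h1 hhP
  · exact absurd h0 (hπ P).ne'

end LikelihoodRatio

end Testing

section Tournaments

variable {m : ℕ}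

lemma Tournament.self_eq_false (V : Tournament m) (x : Fin m) : V.1 x x = false :=
  (V.2 x x).1 rfl

lemma Tournament.swap_eq_not (V : Tournament m) {x y : Fin m} (h : x ≠ y) :
    V.1 x y = !V.1 y x :=
  (V.2 x y).2 h

instance : Inhabited (Tournament m) :=
  ⟨⟨fun x y => decide (x < y), fun x y => ⟨by rintro rfl; simp, fun h => by
    rcases h.lt_or_gt with h | h <;> simp [h, h.not_gt]⟩⟩⟩

lemma two_mul_KTt (U V : Tournament m) :
    2 * KTt U V = #{p : Fin m × Fin m | U.1 p.1 p.2 ≠ V.1 p.1 p.2} := by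
  have hpair : ∀ p : Fin m × Fin m, (if U.1 p.1 p.2 ≠ V.1 p.1 p.2 then 1 else 0) =
      (if U.1 p.1 p.2 = true ∧ V.1 p.2 p.1 = true then 1 else 0) +
      (if U.1 p.2 p.1 = true ∧ V.1 p.1 p.2 = true then 1 else 0) := by
    rintro ⟨x, y⟩
    by_cases hxy : x = y
    · subst hxy; simp [Tournament.self_eq_false]
    · rw [U.swap_eq_not (Ne.symm hxy), V.swap_eq_not (Ne.symm hxy)]
      cases U.1 x y <;> cases V.1 x y <;> simp
  rw [Finset.card_filter, Finset.sum_congr rfl fun p _ => hpair p, Finset.sum_add_distrib,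
    ← Equiv.sum_comp (Equiv.prodComm _ _) fun p =>
      if U.1 p.2 p.1 = true ∧ V.1 p.1 p.2 = true then 1 else 0, KTt, Finset.card_filter]
  simp only [Equiv.prodComm_apply, Prod.fst_swap, Prod.snd_swap, two_mul]
  congr

def xorTranslate (W W' U : Tournament m) : Tournament m :=
  ⟨fun x y => xor (U.1 x y) (xor (W.1 x y) (W'.1 x y)), fun x y =>
    ⟨by rintro rfl; simp [Tournament.self_eq_false], fun h => by
      dsimp only
      rw [U.swap_eq_not h, W.swap_eq_not h, W'.swap_eq_not h]
      cases U.1 y x <;> cases W.1 y x <;> cases W'.1 y x <;> rfl⟩⟩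

lemma xorTranslate_apply (W W' U : Tournament m) (x y : Fin m) :
    (xorTranslate W W' U).1 x y = xor (U.1 x y) (xor (W.1 x y) (W'.1 x y)) := rfl

lemma xorTranslate_involutive (W W' : Tournament m) : Function.Involutive (xorTranslate W W') :=
  fun U => Subtype.ext <| funext₂ fun x y => by simp [xorTranslate_apply]

lemma KTt_xorTranslate (W W' U : Tournament m) : KTt (xorTranslate W W' U) W' = KTt U W := by
  have h := two_mul_KTt (xorTranslate W W' U) W'
  simp only [xorTranslate_apply] at h
  have : ∀ u w w' : Bool, (xor u (xor w w') ≠ w') ↔ (u ≠ w) := by decide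
  simp only [this, ← two_mul_KTt U W] at h
  omega

lemma sum_pow_KTt_eq (φ : ℝ) (W W' : Tournament m) :
    ∑ U : Tournament m, φ ^ KTt U W' = ∑ U : Tournament m, φ ^ KTt U W := by
  rw [← Equiv.sum_comp (xorTranslate_involutive W W').toPerm]
  simp [KTt_xorTranslate]

lemma condorcet1_xorTranslate (φ : ℝ) (W W' U : Tournament m) :
    condorcet1 φ W' (xorTranslate W W' U) = condorcet1 φ W U := by
  rw [condorcet1, condorcet1, KTt_xorTranslate, sum_pow_KTt_eq φ W W']

def setAgainst (a : Fin m) (β : Fin m → Bool) (V : Tournament m) : Tournament m :=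
  ⟨fun x y => if x = a then (y != a && !β y) else if y = a then β x else V.1 x y, fun x y =>
    ⟨by rintro rfl; by_cases hx : x = a <;> simp [hx, Tournament.self_eq_false], fun h => by
      by_cases hx : x = a <;> by_cases hy : y = a
      · exact absurd (hx.trans hy.symm) h
      · simp [hx, hy]
      · simp [hx, hy]
      · simp [hx, hy, V.swap_eq_not h]⟩⟩

lemma setAgainst_apply_left (a : Fin m) (β : Fin m → Bool) (V : Tournament m) {b : Fin m}
    (hb : b ≠ a) : (setAgainst a β V).1 b a = β b := by
  simp [setAgainst, hb]

lemma setAgainst_apply_right (a : Fin m) (β : Fin m → Bool) (V : Tournament m) {b : Fin m}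
    (hb : b ≠ a) : (setAgainst a β V).1 a b = !β b := by
  simp [setAgainst, hb]

lemma setAgainst_apply_of_ne (a : Fin m) (β : Fin m → Bool) (V : Tournament m) {x y : Fin m}
    (hx : x ≠ a) (hy : y ≠ a) : (setAgainst a β V).1 x y = V.1 x y := by
  simp [setAgainst, hx, hy]

abbrev toTop (a : Fin m) (V : Tournament m) : Tournament m := setAgainst a (fun _ => false) V

lemma toTop_mem_Rtop (a : Fin m) (V : Tournament m) : toTop a V ∈ Rtop a :=
  fun _ hb => by simp [setAgainst_apply_right _ _ _ hb]

lemma Rtop_apply_left {a : Fin m} {W : Tournament m} (hW : W ∈ Rtop a) (b : Fin m) :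
    W.1 b a = false := by
  by_cases hb : b = a
  · exact hb ▸ W.self_eq_false b
  · rw [W.swap_eq_not hb, hW b hb]; rfl

lemma Rtop_apply_right {a : Fin m} {W : Tournament m} (hW : W ∈ Rtop a) (b : Fin m) :
    W.1 a b = decide (b ≠ a) := by
  by_cases hb : b = a
  · simp [hb, W.self_eq_false]
  · simp [hb, hW b hb]

def above (V : Tournament m) (a : Fin m) : Finset (Fin m) := {b | V.1 b a = true}

lemma notMem_above (V : Tournament m) (a : Fin m) : a ∉ above V a := by
  simp [above, V.self_eq_false]

lemma above_nonempty_of_notMem_Rtop {a : Fin m} {V : Tournament m} (hV : V ∉ Rtop a) :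
    (above V a).Nonempty := by
  simp only [Rtop, Set.mem_ofPred_eq, not_forall] at hV
  obtain ⟨b, hb, hab⟩ := hV
  refine ⟨b, Finset.mem_filter.2 ⟨Finset.mem_univ b, ?_⟩⟩
  rw [V.swap_eq_not (Ne.symm hb)] at hab
  simpa using hab

def score (U : Tournament m) (B : Finset (Fin m)) (a : Fin m) : ℤ :=
  ∑ b ∈ B, ((if U.1 b a then 1 else 0) - (if U.1 a b then 1 else 0))

lemma wsetT_eq_sum_score {n : ℕ} (P : Fin n → Tournament m) (B : Finset (Fin m)) (a : Fin m) :
    wsetT P B a = ∑ i, score (P i) B a := by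
  simp only [wsetT, wpairT, score, Finset.card_filter, Nat.cast_sum, Nat.cast_ite,
    Nat.cast_one, Nat.cast_zero, ← Finset.sum_sub_distrib]
  exact Finset.sum_comm

lemma score_setAgainst {a : Fin m} {B : Finset (Fin m)} (ha : a ∉ B) (β : Fin m → Bool)
    (V : Tournament m) :
    score (setAgainst a β V) B a = ∑ b ∈ B, if β b then 1 else -1 :=
  Finset.sum_congr rfl fun b hb => by
    have hba : b ≠ a := fun h => ha (h ▸ hb)
    rw [setAgainst_apply_left _ _ _ hba, setAgainst_apply_right _ _ _ hba]
    cases β b <;> simp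

lemma score_setAgainst_bne {a : Fin m} {B : Finset (Fin m)} (ha : a ∉ B) (c : Fin m)
    (V : Tournament m) :
    score (setAgainst a (· != c) V) B a = B.card - if c ∈ B then 2 else 0 := by
  rw [score_setAgainst ha, ← Finset.sum_ite_eq B c fun _ => (2 : ℤ), Finset.card_eq_sum_ones,
    Nat.cast_sum, ← Finset.sum_sub_distrib]
  refine Finset.sum_congr rfl fun b _ => ?_
  by_cases h : b = c
  · simp [h]
  · simp [h, Ne.symm h]

lemma score_setAgainst_true {a : Fin m} {B : Finset (Fin m)} (ha : a ∉ B) (V : Tournament m) :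
    score (setAgainst a (fun _ => true) V) B a = B.card := by
  simp [score_setAgainst ha]

lemma KTt_eq_sum (U V : Tournament m) :
    (KTt U V : ℤ) = ∑ x, ∑ y, if U.1 x y = true ∧ V.1 y x = true then 1 else 0 := by
  rw [KTt, Finset.card_filter, Nat.cast_sum, ← Finset.univ_product_univ, Finset.sum_product]
  push_cast
  rfl

lemma KTt_eq_KTt_toTop_sub_score (a : Fin m) (U V : Tournament m) :
    (KTt U V : ℤ) = KTt U (toTop a V) - score U (above V a) a := by
  -- the two inversion counts differ only on the pairs `(a, b)` and `(b, a)` with `b` above `a`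
  have hpair : ∀ x y, (if U.1 x y = true ∧ V.1 y x = true then (1 : ℤ) else 0) =
      (if U.1 x y = true ∧ (toTop a V).1 y x = true then 1 else 0) +
      (if x = a then (if V.1 y a = true ∧ U.1 a y = true then 1 else 0) else 0) -
      (if y = a then (if V.1 x a = true ∧ U.1 x a = true then 1 else 0) else 0) := by
    intro x y
    by_cases hx : x = a <;> by_cases hy : y = a
    · subst hx; subst hy; simp [U.self_eq_false]
    · subst hx; simp [hy, setAgainst_apply_left _ _ _ hy, and_comm]
    · subst hy
      rw [V.swap_eq_not hx]
      cases V.1 y x <;> simp [hx, setAgainst_apply_right _ _ _ hx]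
    · simp [hx, hy, setAgainst_apply_of_ne _ _ _ hy hx]
  rw [KTt_eq_sum, KTt_eq_sum, score, Finset.sum_sub_distrib, above, Finset.sum_filter,
    Finset.sum_filter]
  simp only [hpair, Finset.sum_add_distrib, Finset.sum_sub_distrib]
  rw [Finset.sum_comm (f := fun x y => if y = a then _ else _)]
  simp only [← Finset.ite_sum_zero, Finset.sum_ite_eq', Finset.mem_univ, if_true, ite_and]
  ring

end Tournaments

section Model

variable {m n : ℕ} {φ : ℝ}

lemma condorcet1_pos (hφ : 0 < φ) (W V : Tournament m) : 0 < condorcet1 φ W V :=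
  div_pos (pow_pos hφ _) (Finset.sum_pos (fun _ _ => pow_pos hφ _) Finset.univ_nonempty)

lemma condorcet_pos (hφ : 0 < φ) (W : Tournament m) (P : Fin n → Tournament m) :
    0 < condorcet φ n W P :=
  Finset.prod_pos fun i _ => condorcet1_pos hφ W (P i)

lemma sum_condorcet (hφ : 0 < φ) (W : Tournament m) :
    ∑ P : Fin n → Tournament m, condorcet φ n W P = 1 := by
  have hone : ∑ V, condorcet1 φ W V = 1 := by
    simp only [condorcet1]
    rw [← Finset.sum_div]
    exact div_self (Finset.sum_pos (fun _ _ => pow_pos hφ _) Finset.univ_nonempty).ne'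
  change ∑ P : Fin n → Tournament m, ∏ i, condorcet1 φ W (P i) = 1
  rw [← Fintype.piFinset_univ, ← Finset.prod_univ_sum]
  simp [hone]

lemma condorcet1_eq_mul_toTop (hφ : 0 < φ) (a : Fin m) (V U : Tournament m) :
    condorcet1 φ V U = φ⁻¹ ^ (score U (above V a) a : ℝ) * condorcet1 φ (toTop a V) U := by
  rw [condorcet1, condorcet1, sum_pow_KTt_eq φ (toTop a V) V, ← mul_div_assoc]
  congr 1
  rw [Real.rpow_intCast, inv_zpow', ← zpow_natCast, ← zpow_natCast, ← zpow_add₀ hφ.ne',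
    KTt_eq_KTt_toTop_sub_score a U V]
  ring_nf

lemma condorcet_eq_mul_toTop (hφ : 0 < φ) (a : Fin m) (V : Tournament m)
    (P : Fin n → Tournament m) :
    condorcet φ n V P =
      φ⁻¹ ^ (wsetT P (above V a) a : ℝ) * condorcet φ n (toTop a V) P := by
  simp only [condorcet, condorcet1_eq_mul_toTop hφ a V, Finset.prod_mul_distrib,
    wsetT_eq_sum_score, Int.cast_sum, Real.rpow_sum_of_pos (inv_pos.2 hφ)]

lemma size_eq_of_xorTranslate_invariant (W W' : Tournament m)
    (g : (Fin n → Tournament m) → ℝ) (hg : ∀ P, g (fun i => xorTranslate W W' (P i)) = g P) :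
    Size (condorcet φ n) g W' = Size (condorcet φ n) g W := by
  rw [Size, Size, ← Equiv.sum_comp
    (Equiv.piCongrRight fun _ => (xorTranslate_involutive W W').toPerm)]
  refine Finset.sum_congr rfl fun P _ => congrArg₂ (· * ·) ?_ (hg P)
  exact Finset.prod_congr rfl fun i _ => condorcet1_xorTranslate φ W W' (P i)

lemma wsetT_xorTranslate {a : Fin m} {W W' : Tournament m} (hW : W ∈ Rtop a)
    (hW' : W' ∈ Rtop a) (P : Fin n → Tournament m) (B : Finset (Fin m)) :
    wsetT (fun i => xorTranslate W W' (P i)) B a = wsetT P B a := by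
  simp [wsetT, wpairT, xorTranslate_apply, Rtop_apply_left hW, Rtop_apply_left hW',
    Rtop_apply_right hW, Rtop_apply_right hW']

lemma size_wTestT_eq {a : Fin m} {W W' : Tournament m} (hW : W ∈ Rtop a) (hW' : W' ∈ Rtop a)
    (B : Finset (Fin m)) (K Γ : ℝ) :
    Size (condorcet φ n) (wTestT n B a K Γ) W' = Size (condorcet φ n) (wTestT n B a K Γ) W :=
  size_eq_of_xorTranslate_invariant W W' _ fun P => by
    simp only [wTestT, wsetT_xorTranslate hW hW']

end Model

section Tests

variable {m n : ℕ} {φ : ℝ} {a : Fin m}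

lemma strictMono_inv_rpow (hφ0 : 0 < φ) (hφ1 : φ < 1) : StrictMono fun t : ℝ => φ⁻¹ ^ t :=
  Real.strictMono_rpow_of_base_gt_one ((one_lt_inv₀ hφ0).2 hφ1)

lemma isMostPowerful_wTestT (hφ0 : 0 < φ) (hφ1 : φ < 1) {B : Finset (Fin m)} {V : Tournament m}
    (hV : V ∈ RBset B a) {W : Tournament m} (hW : W ∈ Rtop a) (K : ℝ) {Γ : ℝ} (hΓ0 : 0 ≤ Γ)
    (hΓ1 : Γ ≤ 1) {α : ℝ} (hsize : Size (condorcet φ n) (wTestT n B a K Γ) W = α) :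
    IsMostPowerful (condorcet φ n) (Rtop a) V α (wTestT n B a K Γ) := by
  obtain rfl : above V a = B := hV
  have hsize' : ∀ W' ∈ Rtop a, Size (condorcet φ n) (wTestT n (above V a) a K Γ) W' = α :=
    fun W' hW' => (size_wTestT_eq hW hW' _ K Γ).trans hsize
  refine ⟨isTest_thresholdTest _ K hΓ0 hΓ1, fun W' hW' => (hsize' W' hW').le,
    fun f hf hfα => ?_⟩
  exact power_le_power_thresholdTest _ (strictMono_inv_rpow hφ0 hφ1).monotone
    (condorcet_eq_mul_toTop hφ0 a V) (fun P => (condorcet_pos hφ0 _ P).le)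
    (Real.rpow_pos_of_pos (inv_pos.2 hφ0) K).le Γ hf
    ((hfα _ (toTop_mem_Rtop a V)).trans (hsize' _ (toTop_mem_Rtop a V)).ge)

lemma exists_isUMP_wTestT (hφ0 : 0 < φ) (hφ1 : φ < 1) {B : Finset (Fin m)}
    {H₁ : Set (Tournament m)} (hB : H₁ ⊆ RBset B a) {α : ℝ} (hα0 : 0 < α) (hα1 : α ≤ 1) :
    ∃ K Γ : ℝ, 0 ≤ Γ ∧ Γ ≤ 1 ∧ IsUMP (condorcet φ n) (Rtop a) H₁ α (wTestT n B a K Γ) := by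
  obtain ⟨K, Γ, hΓ0, hΓ1, hsize⟩ := exists_thresholdTest_sum_eq
    (sum_condorcet hφ0 (toTop a default)) (fun P => (wsetT P B a : ℝ)) hα0 hα1
  exact ⟨K, Γ, hΓ0, hΓ1, fun V hV =>
    isMostPowerful_wTestT hφ0 hφ1 (hB hV) (toTop_mem_Rtop a default) K hΓ0 hΓ1 hsize⟩

lemma IsMostPowerful.exists_threshold (hφ0 : 0 < φ) (hφ1 : φ < 1) {V : Tournament m} {α : ℝ}
    {f : (Fin n → Tournament m) → ℝ} (hf : IsMostPowerful (condorcet φ n) (Rtop a) V α f)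
    (hα0 : 0 < α) (hα1 : α ≤ 1) :
    ∃ K : ℝ, α ≤ ∑ P with K ≤ (wsetT P (above V a) a : ℝ), condorcet φ n (toTop a V) P ∧
      (∀ P, K < wsetT P (above V a) a → f P = 1) ∧
      (∀ P, (wsetT P (above V a) a : ℝ) < K → f P = 0) := by
  obtain ⟨K, Γ, hΓ0, hΓ1, hsize⟩ := exists_thresholdTest_sum_eq
    (sum_condorcet hφ0 (toTop a V)) (fun P => (wsetT P (above V a) a : ℝ)) hα0 hα1
  have hg := isMostPowerful_wTestT hφ0 hφ1 (rfl : V ∈ RBset (above V a) a)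
    (toTop_mem_Rtop a V) K hΓ0 hΓ1 hsize
  have heq : ∀ P, (wsetT P (above V a) a : ℝ) ≠ K → f P = wTestT n (above V a) a K Γ P :=
    fun P hP => eq_thresholdTest_of_power_le _ (strictMono_inv_rpow hφ0 hφ1)
      (condorcet_eq_mul_toTop hφ0 a V) (condorcet_pos hφ0 _)
      (Real.rpow_pos_of_pos (inv_pos.2 hφ0) K).le Γ hf.1
      ((hf.2.1 _ (toTop_mem_Rtop a V)).trans hsize.ge) (hf.2.2 _ hg.1 hg.2.1) hP
  refine ⟨K, hsize ▸ sum_mul_thresholdTest_le (fun P => (condorcet_pos hφ0 _ P).le) _ K hΓ1,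
    fun P hP => ?_, fun P hP => ?_⟩
  · rw [heq P hP.ne', wTestT, if_pos hP]
  · rw [heq P hP.ne, wTestT, if_neg hP.not_gt, if_pos hP]

lemma not_forall_exists_isUMP_of_crossing (hφ0 : 0 < φ) (hφ1 : φ < 1)
    {H₁ : Set (Tournament m)} {V₁ V₂ : Tournament m} (hV₁ : V₁ ∈ H₁) (hV₂ : V₂ ∈ H₁)
    {P Q : Fin n → Tournament m} (h₁ : wsetT P (above V₁ a) a < wsetT Q (above V₁ a) a)
    (h₂ : wsetT Q (above V₂ a) a < wsetT P (above V₂ a) a) :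
    ¬ ∀ α : ℝ, 0 < α → α < 1 → ∃ f, IsUMP (condorcet φ n) (Rtop a) H₁ α f := by
  intro hUMP
  set μ := condorcet φ n (toTop a V₂)
  set A := Finset.univ.filter fun R => wsetT P (above V₂ a) a ≤ wsetT R (above V₂ a) a
  have hQA : Q ∉ A := by simpa [A] using h₂
  have hμ : ∀ R, 0 ≤ μ R := fun R => (condorcet_pos hφ0 _ R).le
  have hμQ : 0 < μ Q := condorcet_pos hφ0 _ Q
  have hAQ : ∑ R ∈ A, μ R + μ Q ≤ 1 := by
    rw [add_comm, ← Finset.sum_insert hQA, ← sum_condorcet hφ0 (toTop a V₂)]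
    exact Finset.sum_le_sum_of_subset_of_nonneg (Finset.subset_univ _) fun R _ _ => hμ R
  have hα0 : 0 < ∑ R ∈ A, μ R + μ Q / 2 :=
    add_pos_of_nonneg_of_pos (Finset.sum_nonneg fun R _ => hμ R) (half_pos hμQ)
  obtain ⟨f, hf⟩ := hUMP _ hα0 (by linarith)
  obtain ⟨K₂, hK₂α, hf₂, -⟩ := (hf V₂ hV₂).exists_threshold hφ0 hφ1 hα0 (by linarith)
  obtain ⟨K₁, -, hf₁, hf₁'⟩ := (hf V₁ hV₁).exists_threshold hφ0 hφ1 hα0 (by linarith)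
  have hK₂ : K₂ < wsetT P (above V₂ a) a := by
    by_contra! h
    have : ∑ R with K₂ ≤ (wsetT R (above V₂ a) a : ℝ), μ R ≤ ∑ R ∈ A, μ R :=
      Finset.sum_le_sum_of_subset_of_nonneg (fun R hR => Finset.mem_filter.2
        ⟨Finset.mem_univ _, by exact_mod_cast h.trans (Finset.mem_filter.1 hR).2⟩)
        fun R _ _ => hμ R
    linarith
  have hfA : ∀ R ∈ A, f R = 1 := fun R hR =>
    hf₂ R (hK₂.trans_le (by exact_mod_cast (Finset.mem_filter.1 hR).2))
  have hfP : f P = 1 := hfA P (by simp [A])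
  have hfQ : f Q = 1 := by
    refine hf₁ Q (lt_of_le_of_lt (b := (wsetT P (above V₁ a) a : ℝ))
      (not_lt.1 fun h => ?_) (by exact_mod_cast h₁))
    simpa [hfP] using hf₁' P h
  have hsize := (hf V₂ hV₂).2.1 _ (toTop_mem_Rtop a V₂)
  have hlower := sum_le_sum_mul_of_eq_one hμ (hf V₂ hV₂).1 (s := insert Q A)
    (Finset.forall_mem_insert _ _ _ |>.2 ⟨hfQ, hfA⟩)
  rw [Finset.sum_insert hQA] at hlower
  change ∑ R, μ R * f R ≤ _ at hsize
  linarith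

lemma exists_crossing_profiles (hn : 2 ≤ n) {B₁ B₂ : Finset (Fin m)} (ha₁ : a ∉ B₁)
    (ha₂ : a ∉ B₂) {b₁ b₂ : Fin m} (hb₁ : b₁ ∈ B₁) (hb₁₂ : b₁ ∉ B₂) (hb₂ : b₂ ∈ B₂) :
    ∃ P Q : Fin n → Tournament m, wsetT P B₁ a < wsetT Q B₁ a ∧ wsetT Q B₂ a < wsetT P B₂ a := by
  -- In `P` every voter ranks `b₁` alone below `a`; in `Q` voter `i₀` ranks `b₂` alone below `a`
  -- and everybody else ranks `a` last.
  let i₀ : Fin n := ⟨0, by omega⟩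
  let i₁ : Fin n := ⟨1, by omega⟩
  have hi : i₁ ≠ i₀ := by simp [i₀, i₁, Fin.ext_iff]
  refine ⟨fun _ => setAgainst a (· != b₁) default, fun i => if i = i₀
    then setAgainst a (· != b₂) default else setAgainst a (fun _ => true) default, ?_, ?_⟩
  · simp only [wsetT_eq_sum_score]
    refine Finset.sum_lt_sum (fun i _ => ?_) ⟨i₁, Finset.mem_univ _, ?_⟩
    · split_ifs <;> simp only [score_setAgainst_bne ha₁, score_setAgainst_true ha₁, if_pos hb₁]
        <;> (try split_ifs) <;> omega
    · simp only [if_neg hi, score_setAgainst_bne ha₁, score_setAgainst_true ha₁, if_pos hb₁]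
      omega
  · simp only [wsetT_eq_sum_score]
    refine Finset.sum_lt_sum (fun i _ => ?_) ⟨i₀, Finset.mem_univ _, ?_⟩
    · split_ifs <;> simp only [score_setAgainst_bne ha₂, score_setAgainst_true ha₂, if_pos hb₂,
        if_neg hb₁₂] <;> omega
    · simp only [↓reduceIte, score_setAgainst_bne ha₂, if_pos hb₂, if_neg hb₁₂]
      omega

lemma above_subset_above_of_forall_exists_isUMP (hφ0 : 0 < φ) (hφ1 : φ < 1) (hn : 2 ≤ n)
    {H₁ : Set (Tournament m)} (hH₁ : H₁ ⊆ (Rtop a)ᶜ)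
    (hUMP : ∀ α : ℝ, 0 < α → α < 1 →
      ∃ f : (Fin n → Tournament m) → ℝ, IsUMP (condorcet φ n) (Rtop a) H₁ α f)
    {V₁ V₂ : Tournament m} (hV₁ : V₁ ∈ H₁) (hV₂ : V₂ ∈ H₁) : above V₁ a ⊆ above V₂ a := by
  intro b₁ hb₁
  by_contra hb₁₂
  obtain ⟨b₂, hb₂⟩ := above_nonempty_of_notMem_Rtop (hH₁ hV₂)
  obtain ⟨P, Q, h₁, h₂⟩ := exists_crossing_profiles hn (notMem_above V₁ a)
    (notMem_above V₂ a) hb₁ hb₁₂ hb₂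
  exact not_forall_exists_isUMP_of_crossing hφ0 hφ1 hV₁ hV₂ h₁ h₂ hUMP

end Tests

theorem stmt11_general (m n : ℕ) (hn : 2 ≤ n) (φ : ℝ) (hφ0 : 0 < φ) (hφ1 : φ < 1)
    (a : Fin m) (H₁ : Set (Tournament m)) (hne : H₁.Nonempty) (hH₁ : H₁ ⊆ (Rtop a)ᶜ) :
    ((∀ α : ℝ, 0 < α → α < 1 →
        ∃ f : (Fin n → Tournament m) → ℝ, IsUMP (condorcet φ n) (Rtop a) H₁ α f) ↔
      ∃ B : Finset (Fin m), a ∉ B ∧ H₁ ⊆ RBset B a) ∧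
    (∀ B : Finset (Fin m), a ∉ B → H₁ ⊆ RBset B a →
      ∀ α : ℝ, 0 < α → α < 1 →
        ∃ K Γ : ℝ, 0 ≤ Γ ∧ Γ ≤ 1 ∧
          IsUMP (condorcet φ n) (Rtop a) H₁ α (wTestT n B a K Γ)) := by
  refine ⟨⟨fun hUMP => ?_, ?_⟩,
    fun B _ hB α hα0 hα1 => exists_isUMP_wTestT hφ0 hφ1 hB hα0 hα1.le⟩
  · obtain ⟨V₀, hV₀⟩ := hne
    exact ⟨above V₀ a, notMem_above V₀ a, fun V hV => Finset.Subset.antisymm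
      (above_subset_above_of_forall_exists_isUMP hφ0 hφ1 hn hH₁ hUMP hV hV₀)
      (above_subset_above_of_forall_exists_isUMP hφ0 hφ1 hn hH₁ hUMP hV₀ hV)⟩
  · rintro ⟨B, -, hB⟩ α hα0 hα1
    obtain ⟨K, Γ, -, -, hump⟩ := exists_isUMP_wTestT (n := n) hφ0 hφ1 hB hα0 hα1.le
    exact ⟨_, hump⟩

/-- **Characterization of UMP non-winner tests for Condorcet.**
For `m ≥ 2`, `n ≥ 2`, and `∅ ≠ H₁ ⊆ ℬ(𝒜)∖R_{a≻others}` : a level-`α` UMP test for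
`H₀ = R_{a≻others}` vs `H₁` exists for every `0<α<1` iff `H₁ ⊆ R_{B≻a}` for some
`B ⊆ 𝒜∖{a}`; moreover in that case the threshold test on `w_P(B≻a)` is a UMP test. -/
theorem stmt11 (m n : ℕ) (hm : 2 ≤ m) (hn : 2 ≤ n) (φ : ℝ) (hφ0 : 0 < φ) (hφ1 : φ < 1)
    (a : Fin m) (H₁ : Set (Tournament m)) (hne : H₁.Nonempty) (hH₁ : H₁ ⊆ (Rtop a)ᶜ) :
    ((∀ α : ℝ, 0 < α → α < 1 →
        ∃ f : (Fin n → Tournament m) → ℝ, IsUMP (condorcet φ n) (Rtop a) H₁ α f) ↔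
      ∃ B : Finset (Fin m), a ∉ B ∧ H₁ ⊆ RBset B a) ∧
    (∀ B : Finset (Fin m), a ∉ B → H₁ ⊆ RBset B a →
      ∀ α : ℝ, 0 < α → α < 1 →
        ∃ K Γ : ℝ, 0 ≤ Γ ∧ Γ ≤ 1 ∧
          IsUMP (condorcet φ n) (Rtop a) H₁ α (wTestT n B a K Γ)) :=
  stmt11_general m n hn φ hφ0 hφ1 a H₁ hne hH₁

end Voting
end
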